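/- Let B be a commutative unital real Banach algebra, d ≥ 1, and let S ⊆ B be a closed Σ B^{2d}-module of B (1 ∈ S, S+S ⊆ S, b^{2d}·S ⊆ S for all b ∈ B). Then S is archimedean: for every a ∈ B there is an integer n ≥ 1 with n + a ∈ S. In fact ‖a‖ + a ∈ S for all a ∈ B. -/

import Mathlib

/-!
In a commutative Banach algebra the exponentials form a subgroup of the group of units, and by
the inverse function theorem this subgroup contains a neighbourhood of `1`; so it is open, hence
also closed. The ball of radius `1` around `1` is a connected set of units, so all its elements
are exponentials and therefore have `m`-th roots for every `m ≥ 1`. Rescaling, `t • 1 + a` is an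
`m`-th power whenever `‖a‖ < t`, and letting `t` decrease to `‖a‖` in the closed set `S` gives
`‖a‖ • 1 + a ∈ S`.
-/

open NormedSpace Topology

theorem ball_one_subset_range_val {R : Type*} [NormedRing R] [HasSummableGeomSeries R] :
    Metric.ball (1 : R) 1 ⊆ Set.range (Units.val : Rˣ → R) :=
  fun x hx => sub_sub_self 1 x ▸ (Units.oneSub (1 - x) (by rwa [mem_ball_iff_norm'] at hx)).isUnit

section
variable {B : Type*} [NormedCommRing B] [NormedAlgebra ℝ B] [CompleteSpace B]

theorem range_exp_mem_nhds_one : Set.range (exp : B → B) ∈ 𝓝 1 := by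
  have hderiv : HasStrictFDerivAt exp (ContinuousLinearEquiv.refl ℝ B : B →L[ℝ] B) 0 :=
    hasStrictFDerivAt_exp_zero
  rw [← exp_zero, ← hderiv.map_nhds_eq_of_equiv]
  exact Filter.mem_map.2 (Filter.univ_mem' fun x => ⟨x, rfl⟩)

variable (B) in
def expSubgroup : Subgroup Bˣ :=
  letI : NormedAlgebra ℚ B := .restrictScalars ℚ ℝ B
  { carrier := {u | (u : B) ∈ Set.range exp}
    one_mem' := ⟨0, exp_zero⟩
    mul_mem' := by
      rintro u v ⟨x, hx⟩ ⟨y, hy⟩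
      exact ⟨x + y, by rw [exp_add, hx, hy, Units.val_mul]⟩
    inv_mem' := by
      rintro u ⟨x, hx⟩
      refine ⟨-x, ?_⟩
      rw [← mul_one (exp (-x)), ← u.mul_inv, ← hx, ← mul_assoc, ← exp_add, neg_add_cancel,
        exp_zero, one_mul] }

theorem isClopen_expSubgroup : IsClopen (expSubgroup B : Set Bˣ) := by
  have hopen : IsOpen (expSubgroup B : Set Bˣ) :=
    Subgroup.isOpen_of_mem_nhds _ (g := 1)
      (Units.continuous_val.continuousAt.preimage_mem_nhds (x := (1 : Bˣ)) range_exp_mem_nhds_one)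
  exact ⟨Subgroup.isClosed_of_isOpen _ hopen, hopen⟩

theorem ball_one_subset_range_exp : Metric.ball (1 : B) 1 ⊆ Set.range (exp : B → B) := by
  set V : Set Bˣ := Units.val ⁻¹' Metric.ball 1 1
  have hV : IsPreconnected V := by
    rw [← Units.isOpenEmbedding_val.isInducing.isPreconnected_image,
      Set.image_preimage_eq_of_subset ball_one_subset_range_val]
    exact (convex_ball 1 1).isPreconnected
  have hVexp : V ⊆ expSubgroup B :=
    hV.subset_isClopen isClopen_expSubgroup ⟨1, by simp [V], one_mem _⟩
  intro x hx
  obtain ⟨u, rfl⟩ := ball_one_subset_range_val hx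
  exact hVexp hx

theorem exists_pow_eq_of_norm_sub_one_lt {m : ℕ} (hm : m ≠ 0) {x : B} (hx : ‖x - 1‖ < 1) :
    ∃ b : B, b ^ m = x := by
  let : NormedAlgebra ℚ B := .restrictScalars ℚ ℝ B
  obtain ⟨z, rfl⟩ := ball_one_subset_range_exp (mem_ball_iff_norm.2 hx)
  refine ⟨exp ((m : ℝ)⁻¹ • z), ?_⟩
  rw [← exp_nsmul, ← Nat.cast_smul_eq_nsmul ℝ, smul_smul, mul_inv_cancel₀ (by exact_mod_cast hm),
    one_smul]

theorem exists_pow_eq_smul_one_add {m : ℕ} (hm : m ≠ 0) {a : B} {t : ℝ} (ht : ‖a‖ < t) :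
    ∃ b : B, b ^ m = t • 1 + a := by
  have ht0 : 0 < t := (norm_nonneg a).trans_lt ht
  have hnear : ‖(1 + t⁻¹ • a) - 1‖ < 1 := by
    rw [add_sub_cancel_left, norm_smul, Real.norm_of_nonneg (inv_nonneg.2 ht0.le),
      inv_mul_lt_one₀ ht0]
    exact ht
  obtain ⟨b, hb⟩ := exists_pow_eq_of_norm_sub_one_lt hm hnear
  refine ⟨(t ^ (m : ℝ)⁻¹) • b, ?_⟩
  rw [smul_pow, Real.rpow_inv_natCast_pow ht0.le hm, hb, smul_add, smul_smul,
    mul_inv_cancel₀ ht0.ne', one_smul]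

variable {m : ℕ} {S : Set B}

theorem smul_one_add_mem_of_norm_lt (hm : m ≠ 0) (hpow : ∀ b : B, b ^ m ∈ S) {a : B} {t : ℝ}
    (ht : ‖a‖ < t) : t • (1 : B) + a ∈ S := by
  obtain ⟨b, hb⟩ := exists_pow_eq_smul_one_add hm ht
  exact hb ▸ hpow b

theorem norm_smul_one_add_mem (hm : m ≠ 0) (hpow : ∀ b : B, b ^ m ∈ S) (hS : IsClosed S)
    (a : B) : ‖a‖ • (1 : B) + a ∈ S := by
  have hlim : Filter.Tendsto (fun t : ℝ => t • (1 : B) + a) (𝓝[>] ‖a‖) (𝓝 (‖a‖ • 1 + a)) :=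
    ((continuous_id.smul continuous_const).add continuous_const).continuousWithinAt
  exact hS.mem_of_tendsto hlim
    (eventually_nhdsWithin_of_forall fun t ht => smul_one_add_mem_of_norm_lt hm hpow ht)

end

theorem stmt7_general {B : Type*} [NormedCommRing B] [NormedAlgebra ℝ B] [CompleteSpace B]
    (d : ℕ) (hd : 1 ≤ d) (S : Set B) (hclosed : IsClosed S)
    (h1 : (1 : B) ∈ S)
    (hmul : ∀ b : B, ∀ s ∈ S, b ^ (2 * d) * s ∈ S) :
    ∀ a : B, ‖a‖ • (1 : B) + a ∈ S ∧ ∃ n : ℕ, 1 ≤ n ∧ (n : B) + a ∈ S := by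
  have hm : 2 * d ≠ 0 := by omega
  have hpow : ∀ b : B, b ^ (2 * d) ∈ S := fun b => by simpa using hmul b 1 h1
  intro a
  obtain ⟨n, hn⟩ := exists_nat_gt ‖a‖
  have hmem := smul_one_add_mem_of_norm_lt hm hpow hn
  rw [Nat.cast_smul_eq_nsmul, nsmul_one] at hmem
  have hn0 : 0 < n := by exact_mod_cast (norm_nonneg a).trans_lt hn
  exact ⟨norm_smul_one_add_mem hm hpow hclosed a, n, hn0, hmem⟩

/-- A closed `Σ B^{2d}`-module of a commutative unital real Banach algebra is archimedean;
in fact `‖a‖ + a ∈ S` for all `a ∈ B`. -/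
theorem stmt7 {B : Type*} [NormedCommRing B] [NormedAlgebra ℝ B] [CompleteSpace B]
    (d : ℕ) (hd : 1 ≤ d) (S : Set B) (hclosed : IsClosed S)
    (h1 : (1 : B) ∈ S) (hadd : ∀ s ∈ S, ∀ t ∈ S, s + t ∈ S)
    (hmul : ∀ b : B, ∀ s ∈ S, b ^ (2 * d) * s ∈ S) :
    ∀ a : B, ‖a‖ • (1 : B) + a ∈ S ∧ ∃ n : ℕ, 1 ≤ n ∧ (n : B) + a ∈ S :=
  stmt7_general d hd S hclosed h1 hmul
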